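/- arXiv:2307.04202 — 2 statements merged into one kernel-verified Lean document; each statement's English description precedes it below -/
import Mathlib

section
/- Let Q₃ : ℤ³ → ℤ be the quadratic form Q₃(a, b₁, b₂) = a² − b₁² − b₂², and let G be the subgroup of ℤ-linear automorphisms of ℤ³ generated by the three coordinate-negation maps, the map interchanging the last two coordinates, and the reflection r(a, b₁, b₂) = (a + 2c, b₁ + 2c, b₂ + 2c) with c = a − b₁ − b₂. Then for every α ∈ ℤ³ with Q₃(α) = 0 there exist g ∈ G and an integer a ≥ 0 such that g(α) = (a, a, 0). -/
/-!
Sign changes and the swap of the last two coordinates move a class of square zero to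
`(a, b, c)` with `a ≥ 0`, `b ≥ c ≥ 0` and `a² = b² + c²`. If `c = 0` then `a = b` and we are done.
Otherwise the reflection `r3`, which preserves `Q3`, replaces `a` by `3a - 2b - 2c`; since
`a < b + c < 2a`, this has absolute value less than `a`, so the process terminates.
-/

/-- The intersection form of `CP² # 2CP̄²`. -/
def Q3 (v : Fin 3 → ℤ) : ℤ := v 0 ^ 2 - v 1 ^ 2 - v 2 ^ 2

/-- Negation of the `j`-th coordinate. -/
def neg3 (j : Fin 3) (v : Fin 3 → ℤ) : Fin 3 → ℤ := fun i => if i = j then -v i else v i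

/-- Interchanging the last two coordinates. -/
def swap3 (v : Fin 3 → ℤ) : Fin 3 → ℤ := v ∘ Equiv.swap 1 2

/-- Reflection in the class `(1,1,1)`. -/
def r3 (v : Fin 3 → ℤ) : Fin 3 → ℤ :=
  ![v 0 + 2 * (v 0 - v 1 - v 2), v 1 + 2 * (v 0 - v 1 - v 2), v 2 + 2 * (v 0 - v 1 - v 2)]

/-- The generating set: the three coordinate negations, the swap of the last two
coordinates, and the reflection `r3`, viewed as ℤ-linear automorphisms of `ℤ³`. -/
def gens3 : Set ((Fin 3 → ℤ) ≃ₗ[ℤ] (Fin 3 → ℤ)) :=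
  {e | (∃ j, ⇑e = neg3 j) ∨ ⇑e = swap3 ∨ ⇑e = r3}

def Reachable (α β : Fin 3 → ℤ) : Prop :=
  ∃ g ∈ Subgroup.closure gens3, g α = β

namespace Reachable

theorem refl (α : Fin 3 → ℤ) : Reachable α α :=
  ⟨1, one_mem _, rfl⟩

theorem trans {α β γ : Fin 3 → ℤ} (hαβ : Reachable α β) (hβγ : Reachable β γ) :
    Reachable α γ := by
  obtain ⟨g, hg, rfl⟩ := hαβ
  obtain ⟨h, hh, rfl⟩ := hβγ
  exact ⟨h * g, mul_mem hh hg, rfl⟩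

theorem of_involutive_mem_gens3 {f : (Fin 3 → ℤ) → Fin 3 → ℤ}
    (hf_add : ∀ x y, f (x + y) = f x + f y) (hf : Function.Involutive f)
    (hgen : (∃ j, f = neg3 j) ∨ f = swap3 ∨ f = r3)
    (α : Fin 3 → ℤ) : Reachable α (f α) :=
  ⟨LinearEquiv.ofInvolutive (AddMonoidHom.mk' f hf_add).toIntLinearMap hf,
    Subgroup.subset_closure hgen, rfl⟩

end Reachable

theorem reachable_neg3 (j : Fin 3) (α : Fin 3 → ℤ) : Reachable α (neg3 j α) := by
  refine Reachable.of_involutive_mem_gens3 (fun x y => ?_) (fun v => ?_) (.inl ⟨j, rfl⟩) α <;>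
    funext i <;> by_cases h : i = j <;> simp [neg3, h, add_comm]

theorem reachable_swap3 (α : Fin 3 → ℤ) : Reachable α (swap3 α) := by
  refine Reachable.of_involutive_mem_gens3 (fun x y => rfl) (fun v => ?_) (.inr (.inl rfl)) α
  funext i
  simp [swap3]

theorem reachable_r3 (α : Fin 3 → ℤ) : Reachable α (r3 α) := by
  refine Reachable.of_involutive_mem_gens3 (fun x y => ?_) (fun v => ?_) (.inr (.inr rfl)) α <;>
    funext i <;> fin_cases i <;> simp [r3] <;> ring

theorem Q3_neg3 (j : Fin 3) (v : Fin 3 → ℤ) : Q3 (neg3 j v) = Q3 v := by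
  fin_cases j <;> simp [Q3, neg3]

theorem Q3_swap3 (v : Fin 3 → ℤ) : Q3 (swap3 v) = Q3 v := by
  simp [Q3, swap3, Equiv.swap_apply_of_ne_of_ne]
  ring

theorem Q3_r3 (v : Fin 3 → ℤ) : Q3 (r3 v) = Q3 v := by
  simp [Q3, r3]
  ring

theorem Q3_apply_of_mem_closure {g : (Fin 3 → ℤ) ≃ₗ[ℤ] (Fin 3 → ℤ)}
    (hg : g ∈ Subgroup.closure gens3) (v : Fin 3 → ℤ) : Q3 (g v) = Q3 v := by
  induction hg using Subgroup.closure_induction generalizing v with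
  | mem g hg =>
    rcases hg with ⟨j, hj⟩ | hg | hg <;> simp only [*, Q3_neg3, Q3_swap3, Q3_r3]
  | one => rfl
  | mul g h _ _ ihg ihh => exact (ihg _).trans (ihh v)
  | inv g _ ih => rw [← ih, show g (g⁻¹ v) = v from g.apply_symm_apply v]

theorem Reachable.Q3_eq {α β : Fin 3 → ℤ} (h : Reachable α β) : Q3 β = Q3 α := by
  obtain ⟨g, hg, rfl⟩ := h
  exact Q3_apply_of_mem_closure hg α

theorem reachable_abs_coord (j : Fin 3) (α : Fin 3 → ℤ) :
    Reachable α (fun i => if i = j then |α i| else α i) := by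
  by_cases hj : α j < 0
  · convert reachable_neg3 j α using 1
    funext i
    by_cases hi : i = j
    · simp [neg3, hi, abs_of_neg hj]
    · simp [neg3, hi]
  · convert Reachable.refl α using 1
    funext i
    by_cases hi : i = j
    · simp [hi, abs_of_nonneg (not_lt.mp hj)]
    · simp [hi]

theorem reachable_abs (α : Fin 3 → ℤ) : Reachable α (fun i => |α i|) := by
  refine ((reachable_abs_coord 0 α).trans (reachable_abs_coord 1 _)).trans ?_
  convert reachable_abs_coord 2 _ using 1
  funext i
  fin_cases i <;> simp

theorem exists_reachable_sorted (α : Fin 3 → ℤ) :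
    ∃ b c, 0 ≤ c ∧ c ≤ b ∧ Reachable α ![|α 0|, b, c] := by
  refine ⟨max |α 1| |α 2|, min |α 1| |α 2|, le_min (abs_nonneg _) (abs_nonneg _), min_le_max,
    (reachable_abs α).trans ?_⟩
  rcases le_total |α 2| |α 1| with h | h
  · convert Reachable.refl _ using 1
    funext i
    fin_cases i <;> simp [h]
  · convert reachable_swap3 _ using 1
    funext i
    fin_cases i <;> simp [swap3, h, Equiv.swap_apply_of_ne_of_ne]

theorem abs_three_mul_sub_two_mul_sub_two_mul_lt {a b c : ℤ} (ha : 0 ≤ a) (hb : 0 < b)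
    (hc : 0 < c) (h : a ^ 2 = b ^ 2 + c ^ 2) : |3 * a - 2 * b - 2 * c| < a := by
  have hlt : a < b + c := by nlinarith [mul_pos hb hc]
  have hgt : b + c < 2 * a := by nlinarith [sq_nonneg (b - c)]
  rw [abs_lt]
  constructor <;> linarith

theorem exists_reachable_normal_form (α : Fin 3 → ℤ) (hα : Q3 α = 0) :
    ∃ a, 0 ≤ a ∧ Reachable α ![a, a, 0] := by
  induction hn : (α 0).natAbs using Nat.strong_induction_on generalizing α with
  | _ n ih =>
  obtain ⟨b, c, hc, hcb, hsort⟩ := exists_reachable_sorted α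
  have habc : |α 0| ^ 2 = b ^ 2 + c ^ 2 := by
    have := hsort.Q3_eq
    rw [hα] at this
    simp only [Q3, Matrix.cons_val] at this
    linarith
  rcases hc.eq_or_lt with rfl | hc0
  · have hab : |α 0| = b := by nlinarith [abs_nonneg (α 0)]
    exact ⟨|α 0|, abs_nonneg _, hab ▸ hsort⟩
  · set γ := r3 ![|α 0|, b, c]
    have hγ : Q3 γ = 0 := by rw [Q3_r3]; simp [Q3, habc]
    have hγ0 : γ 0 = 3 * |α 0| - 2 * b - 2 * c := by simp [γ, r3]; ring
    have hlt : (γ 0).natAbs < n := by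
      have := abs_three_mul_sub_two_mul_sub_two_mul_lt (abs_nonneg _) (hc0.trans_le hcb) hc0 habc
      rw [← hγ0, Int.abs_eq_natAbs, Int.abs_eq_natAbs] at this
      omega
    obtain ⟨a, ha, hγa⟩ := ih _ hlt γ hγ rfl
    exact ⟨a, ha, (hsort.trans (reachable_r3 _)).trans hγa⟩

/-- Every class of square zero in the intersection lattice of `CP² # 2CP̄²` can be
moved by the group generated by the listed automorphisms to a class `(a, a, 0)`
with `a ≥ 0`. -/
theorem square_zero_class_normal_form :
    ∀ α : Fin 3 → ℤ, Q3 α = 0 → ∃ g ∈ Subgroup.closure gens3, ∃ a : ℤ,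
      0 ≤ a ∧ g α = ![a, a, 0] := by
  intro α hQ
  obtain ⟨a, ha, g, hg, hgα⟩ := exists_reachable_normal_form α hQ
  exact ⟨g, hg, a, ha, hgα⟩
end

section
/- Let Q₄ : ℤ⁴ → ℤ be the quadratic form Q₄(a, b₁, b₂, b₃) = a² − b₁² − b₂² − b₃², and let G be the subgroup of ℤ-linear automorphisms of ℤ⁴ generated by the four coordinate-negation maps, the maps permuting the last three coordinates, and the reflection r(a, b₁, b₂, b₃) = (a + c, b₁ + c, b₂ + c, b₃ + c) with c = a − b₁ − b₂ − b₃. Then for every α ∈ ℤ⁴ with Q₄(α) = 0 there exist g ∈ G and an integer a ≥ 0 such that g(α) = (a, a, 0, 0). -/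
/-- The intersection form of `CP² # 3CP̄²`. -/
def Q4 (v : Fin 4 → ℤ) : ℤ := v 0 ^ 2 - v 1 ^ 2 - v 2 ^ 2 - v 3 ^ 2

/-- Negation of the `j`-th coordinate. -/
def neg4 (j : Fin 4) (v : Fin 4 → ℤ) : Fin 4 → ℤ := fun i => if i = j then -v i else v i

/-- Reflection in the class `(1,1,1,1)`. -/
def r4 (v : Fin 4 → ℤ) : Fin 4 → ℤ :=
  ![v 0 + (v 0 - v 1 - v 2 - v 3), v 1 + (v 0 - v 1 - v 2 - v 3),
    v 2 + (v 0 - v 1 - v 2 - v 3), v 3 + (v 0 - v 1 - v 2 - v 3)]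

/-- The generating set: the four coordinate negations, the permutations of the last
three coordinates (permutations of `Fin 4` fixing `0`), and the reflection `r4`,
viewed as ℤ-linear automorphisms of `ℤ⁴`. -/
def gens4 : Set ((Fin 4 → ℤ) ≃ₗ[ℤ] (Fin 4 → ℤ)) :=
  {e | (∃ j, ⇑e = neg4 j) ∨ (∃ σ : Equiv.Perm (Fin 4), σ 0 = 0 ∧ ⇑e = fun v => v ∘ σ) ∨
    ⇑e = r4}

/-!
Descent on the first coordinate. Sign changes make all coordinates nonnegative, so that
`a² = b₁² + b₂² + b₃²`. If at most one `bᵢ` is nonzero, a permutation gives `(a, a, 0, 0)`.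
Otherwise `b₁b₂ + b₁b₃ + b₂b₃ > 0`, whence `a < b₁ + b₂ + b₃ < 3a`, and the reflection `r4`
replaces `a` by `2a - (b₁ + b₂ + b₃)`, which is smaller in absolute value.
-/

section Moves

variable {R M : Type*} [Semiring R] [AddCommMonoid M] [Module R M]

def Moves (S : Set (M ≃ₗ[R] M)) (v w : M) : Prop :=
  ∃ g ∈ Subgroup.closure S, g v = w

variable {S : Set (M ≃ₗ[R] M)} {u v w : M}

theorem Moves.refl (v : M) : Moves S v v :=
  ⟨1, one_mem _, rfl⟩

theorem Moves.trans (huv : Moves S u v) (hvw : Moves S v w) : Moves S u w := by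
  obtain ⟨g, hg, rfl⟩ := huv
  obtain ⟨h, hh, rfl⟩ := hvw
  exact ⟨h * g, mul_mem hh hg, rfl⟩

theorem Moves.of_mem {e : M ≃ₗ[R] M} (he : e ∈ S) (v : M) : Moves S v (e v) :=
  ⟨e, Subgroup.subset_closure he, rfl⟩

end Moves

theorem neg4_add (j : Fin 4) (v w : Fin 4 → ℤ) : neg4 j (v + w) = neg4 j v + neg4 j w := by
  funext i; simp only [neg4, Pi.add_apply]; split_ifs <;> ring

theorem neg4_involutive (j : Fin 4) : Function.Involutive (neg4 j) := by
  intro v; funext i; simp only [neg4]; split_ifs <;> simp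

theorem r4_add (v w : Fin 4 → ℤ) : r4 (v + w) = r4 v + r4 w := by
  funext i; fin_cases i <;> simp [r4] <;> ring

theorem r4_involutive : Function.Involutive r4 := by
  intro v; funext i; fin_cases i <;> simp [r4] <;> ring

theorem moves_neg4 (j : Fin 4) (v : Fin 4 → ℤ) : Moves gens4 v (neg4 j v) :=
  Moves.of_mem (e := .ofInvolutive (AddMonoidHom.mk' (neg4 j) (neg4_add j)).toIntLinearMap
    (neg4_involutive j)) (Or.inl ⟨j, rfl⟩) v

theorem moves_comp_perm {σ : Equiv.Perm (Fin 4)} (hσ : σ 0 = 0) (v : Fin 4 → ℤ) :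
    Moves gens4 v (v ∘ σ) :=
  Moves.of_mem (e := LinearEquiv.funCongrLeft ℤ ℤ σ) (Or.inr (Or.inl ⟨σ, hσ, rfl⟩)) v

theorem moves_r4 (v : Fin 4 → ℤ) : Moves gens4 v (r4 v) :=
  Moves.of_mem (e := .ofInvolutive (AddMonoidHom.mk' r4 r4_add).toIntLinearMap
    r4_involutive) (Or.inr (Or.inr rfl)) v

theorem moves_abs (v : Fin 4 → ℤ) : Moves gens4 v (fun i => |v i|) := by
  suffices h : ∀ s : Finset (Fin 4), Moves gens4 v (fun i => if i ∈ s then |v i| else v i) by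
    simpa using h Finset.univ
  intro s
  induction s using Finset.induction_on with
  | empty => simpa using Moves.refl v
  | insert j s hj ih =>
    refine ih.trans ?_
    rcases lt_or_ge (v j) 0 with hneg | hnonneg
    · convert moves_neg4 j _ using 1
      funext i
      by_cases hij : i = j
      · subst hij; simp [neg4, hj, abs_of_neg hneg]
      · simp [neg4, hij]
    · convert Moves.refl _ using 2 with i
      by_cases hij : i = j
      · subst hij; simp [hj, abs_of_nonneg hnonneg]
      · simp [hij]

theorem Q4_eq_two_mul_sq_sub_sum (v : Fin 4 → ℤ) : Q4 v = 2 * v 0 ^ 2 - ∑ i, v i ^ 2 := by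
  simp only [Q4, Fin.sum_univ_four]; ring

theorem Q4_comp_perm {σ : Equiv.Perm (Fin 4)} (hσ : σ 0 = 0) (v : Fin 4 → ℤ) :
    Q4 (v ∘ σ) = Q4 v := by
  simp only [Q4_eq_two_mul_sq_sub_sum, Function.comp_apply, hσ,
    Equiv.sum_comp σ (fun i => v i ^ 2)]

theorem Q4_r4 (v : Fin 4 → ℤ) : Q4 (r4 v) = Q4 v := by
  simp [Q4, r4]; ring

theorem Q4_abs (v : Fin 4 → ℤ) : Q4 (fun i => |v i|) = Q4 v := by
  simp [Q4]

theorem eq_normal_form_of_Q4_eq_zero {w : Fin 4 → ℤ} (hq : Q4 w = 0) (h0 : 0 ≤ w 0)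
    (h1 : 0 ≤ w 1) (h2 : w 2 = 0) (h3 : w 3 = 0) : w = ![w 0, w 0, 0, 0] := by
  have h10 : w 1 = w 0 := by
    have hsq : w 1 ^ 2 = w 0 ^ 2 := by simp only [Q4, h2, h3] at hq; linarith
    exact (pow_left_inj₀ h1 h0 two_ne_zero).mp hsq
  funext i
  fin_cases i <;> simp [h10, h2, h3]

theorem exists_perm_eq_zero_of_mul_eq_zero {w : Fin 4 → ℤ} (h12 : w 1 * w 2 = 0)
    (h13 : w 1 * w 3 = 0) (h23 : w 2 * w 3 = 0) :
    ∃ σ : Equiv.Perm (Fin 4), σ 0 = 0 ∧ w (σ 2) = 0 ∧ w (σ 3) = 0 := by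
  rcases mul_eq_zero.mp h23 with h2 | h3
  · rcases mul_eq_zero.mp h13 with h1 | h3
    · exact ⟨Equiv.swap 1 3, by decide, by simpa [Equiv.swap_apply_of_ne_of_ne], by simpa⟩
    · exact ⟨1, rfl, h2, h3⟩
  · rcases mul_eq_zero.mp h12 with h1 | h2
    · exact ⟨Equiv.swap 1 2, by decide, by simpa, by simpa [Equiv.swap_apply_of_ne_of_ne]⟩
    · exact ⟨1, rfl, h2, h3⟩

theorem exists_moves_normal_form_of_mul_sum_eq_zero {w : Fin 4 → ℤ} (hw : ∀ i, 0 ≤ w i)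
    (hq : Q4 w = 0) (hflat : w 1 * w 2 + w 1 * w 3 + w 2 * w 3 = 0) :
    ∃ a, 0 ≤ a ∧ Moves gens4 w ![a, a, 0, 0] := by
  have h12 := mul_nonneg (hw 1) (hw 2)
  have h13 := mul_nonneg (hw 1) (hw 3)
  have h23 := mul_nonneg (hw 2) (hw 3)
  obtain ⟨σ, hσ, h2, h3⟩ :=
    exists_perm_eq_zero_of_mul_eq_zero (w := w) (by linarith) (by linarith) (by linarith)
  have hnormal : w ∘ σ = ![w 0, w 0, 0, 0] := by
    simpa [hσ] using eq_normal_form_of_Q4_eq_zero (w := w ∘ σ) ((Q4_comp_perm hσ w).trans hq)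
      (by simpa [hσ] using hw 0) (hw _) h2 h3
  exact ⟨w 0, hw 0, hnormal ▸ moves_comp_perm hσ w⟩

theorem abs_r4_zero_lt {w : Fin 4 → ℤ} (hw : ∀ i, 0 ≤ w i) (hq : Q4 w = 0)
    (hpos : 0 < w 1 * w 2 + w 1 * w 3 + w 2 * w 3) : |r4 w 0| < w 0 := by
  have hq' : w 0 ^ 2 = w 1 ^ 2 + w 2 ^ 2 + w 3 ^ 2 := by simp only [Q4] at hq; linarith
  have h0 := hw 0
  have h1 := hw 1
  have h2 := hw 2
  have h3 := hw 3
  have hlt : w 0 < w 1 + w 2 + w 3 := by nlinarith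
  have hpos0 : 0 < w 0 := by
    have hsq : 0 < w 0 ^ 2 := by
      nlinarith [sq_nonneg (w 1 - w 2), sq_nonneg (w 1 - w 3), sq_nonneg (w 2 - w 3)]
    exact h0.lt_of_ne (by rintro h; simp [← h] at hsq)
  have hgt : w 1 + w 2 + w 3 < 3 * w 0 := by
    nlinarith [sq_nonneg (w 1 - w 2), sq_nonneg (w 1 - w 3), sq_nonneg (w 2 - w 3)]
  have hr : r4 w 0 = 2 * w 0 - (w 1 + w 2 + w 3) := by simp [r4]; ring
  rw [hr, abs_lt]
  constructor <;> linarith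

theorem exists_moves_normal_form {v : Fin 4 → ℤ} (hq : Q4 v = 0) :
    ∃ a, 0 ≤ a ∧ Moves gens4 v ![a, a, 0, 0] := by
  induction hn : (v 0).natAbs using Nat.strong_induction_on generalizing v with
  | _ n ih =>
  set w : Fin 4 → ℤ := fun i => |v i|
  have hw : ∀ i, 0 ≤ w i := fun i => abs_nonneg (v i)
  have hqw : Q4 w = 0 := (Q4_abs v).trans hq
  have hsum : 0 ≤ w 1 * w 2 + w 1 * w 3 + w 2 * w 3 :=
    add_nonneg (add_nonneg (mul_nonneg (hw 1) (hw 2)) (mul_nonneg (hw 1) (hw 3)))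
      (mul_nonneg (hw 2) (hw 3))
  rcases hsum.eq_or_lt with hflat | hpos
  · obtain ⟨a, ha, hwa⟩ := exists_moves_normal_form_of_mul_sum_eq_zero hw hqw hflat.symm
    exact ⟨a, ha, (moves_abs v).trans hwa⟩
  · have hlt : (r4 w 0).natAbs < n := by
      have h : |r4 w 0| < |v 0| := abs_r4_zero_lt hw hqw hpos
      rw [Int.abs_eq_natAbs, Int.abs_eq_natAbs] at h
      omega
    obtain ⟨a, ha, hra⟩ := ih _ hlt ((Q4_r4 w).trans hqw) rfl
    exact ⟨a, ha, ((moves_abs v).trans (moves_r4 w)).trans hra⟩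

/-- Every class of square zero in the intersection lattice of `CP² # 3CP̄²` can be
moved by the group generated by the listed automorphisms to a class `(a, a, 0, 0)`
with `a ≥ 0`. -/
theorem square_zero_class_normal_form_CP2_3CP2bar :
    ∀ α : Fin 4 → ℤ, Q4 α = 0 → ∃ g ∈ Subgroup.closure gens4, ∃ a : ℤ,
      0 ≤ a ∧ g α = ![a, a, 0, 0] := by
  intro α hα
  obtain ⟨a, ha, g, hg, hga⟩ := exists_moves_normal_form hα
  exact ⟨g, hg, a, ha, hga⟩
end
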